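/- Let L be the negative Laplacian of the undirected path on n vertices with arbitrary nonzero real edge weights a_1,…,a_{n−1} (L_{k,k+1} = L_{k+1,k} = a_k, diagonal entries chosen so that each row sums to zero), and let b = e_n (the n-th standard basis vector). Then the Kalman controllability matrix [b, Lb, …, L^{n−1}b] has rank n. -/

import Mathlib

/-- Negative Laplacian of the undirected path on `n+1` vertices with edge
weights `a k` between vertices `k` and `k+1`; rows sum to zero. -/
def pathLap (n : ℕ) (a : Fin n → ℝ) : Matrix (Fin (n + 1)) (Fin (n + 1)) ℝ :=
  Matrix.of fun i j =>
    if h : (i : ℕ) + 1 = (j : ℕ) then a ⟨i, by have := j.isLt; omega⟩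
    else if h' : (j : ℕ) + 1 = (i : ℕ) then a ⟨j, by have := i.isLt; omega⟩
    else if i = j then
      -((if hi : (i : ℕ) < n then a ⟨i, hi⟩ else 0) +
        (if hi : 0 < (i : ℕ) then a ⟨(i : ℕ) - 1, by have := i.isLt; omega⟩ else 0))
    else 0

/-- Kalman controllability matrix `[b, Lb, L²b, …, Lⁿb]` for the pair `(L, b)`. -/
def kalman (n : ℕ) (L : Matrix (Fin (n + 1)) (Fin (n + 1)) ℝ)
    (b : Fin (n + 1) → ℝ) : Matrix (Fin (n + 1)) (Fin (n + 1)) ℝ :=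
  Matrix.of fun i k => (L ^ (k : ℕ)).mulVec b i

/-!
Every matrix `L` that vanishes above its first superdiagonal and has no zero entry on it
(an unreduced lower Hessenberg matrix, such as the Laplacian of a weighted path) moves the
support of a vector down by at most one index. Hence `Lᵏ eₙ` is supported on the indices
`≥ n - k`, with a nonzero entry at `n - k` (a product of superdiagonal entries). Listing the
rows of the Kalman matrix in reverse order makes it upper triangular with nonzero diagonal.
-/

open Matrix

section LowerHessenberg

variable {R : Type*} [Semiring R] {n : ℕ} {L : Matrix (Fin (n + 1)) (Fin (n + 1)) R}

lemma pow_mulVec_single_last_eq_zero (hL : ∀ i j : Fin (n + 1), (i : ℕ) + 1 < j → L i j = 0)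
    {k : ℕ} {i : Fin (n + 1)} (hik : (i : ℕ) + k < n) :
    (L ^ k *ᵥ Pi.single (Fin.last n) 1) i = 0 := by
  induction k generalizing i with
  | zero =>
    rw [pow_zero, one_mulVec, Pi.single_eq_of_ne]
    rintro rfl
    simp at hik
  | succ k ih =>
    rw [pow_succ', ← mulVec_mulVec, mulVec, dotProduct]
    refine Finset.sum_eq_zero fun j _ => ?_
    by_cases hj : (j : ℕ) + k < n
    · rw [ih hj, mul_zero]
    · rw [hL i j (by omega), zero_mul]

lemma pow_mulVec_single_last_ne_zero [NoZeroDivisors R] [Nontrivial R]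
    (hL : ∀ i j : Fin (n + 1), (i : ℕ) + 1 < j → L i j = 0)
    (hsuper : ∀ i : Fin n, L i.castSucc i.succ ≠ 0)
    {k : ℕ} {i : Fin (n + 1)} (hik : (i : ℕ) + k = n) :
    (L ^ k *ᵥ Pi.single (Fin.last n) 1) i ≠ 0 := by
  induction k generalizing i with
  | zero =>
    obtain rfl : i = Fin.last n := Fin.ext hik
    simp
  | succ k ih =>
    let i' : Fin (n + 1) := ⟨i + 1, by omega⟩
    rw [pow_succ', ← mulVec_mulVec, mulVec, dotProduct, Finset.sum_eq_single i']
    · exact mul_ne_zero (hsuper ⟨i, by omega⟩) (ih (by simp only [i']; omega))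
    · intro j _ hj
      have hj' : (j : ℕ) ≠ i + 1 := fun h => hj (Fin.ext h)
      by_cases hjk : (j : ℕ) + k < n
      · rw [pow_mulVec_single_last_eq_zero hL hjk, mul_zero]
      · rw [hL i j (by omega), zero_mul]
    · simp

end LowerHessenberg

lemma kalman_rank_of_lowerHessenberg {n : ℕ} {L : Matrix (Fin (n + 1)) (Fin (n + 1)) ℝ}
    (hL : ∀ i j : Fin (n + 1), (i : ℕ) + 1 < j → L i j = 0)
    (hsuper : ∀ i : Fin n, L i.castSucc i.succ ≠ 0) :
    (kalman n L (Pi.single (Fin.last n) 1)).rank = n + 1 := by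
  set N := (kalman n L (Pi.single (Fin.last n) 1)).submatrix Fin.revPerm (Equiv.refl _)
  have hN : N.IsUpperTriangular := fun i j (hji : j < i) =>
    pow_mulVec_single_last_eq_zero hL (by
      simp only [Fin.revPerm_apply, Fin.val_rev, Equiv.refl_apply]; omega)
  have hdiag : ∀ i, N i i ≠ 0 := fun i =>
    pow_mulVec_single_last_ne_zero hL hsuper (by
      simp only [Fin.revPerm_apply, Fin.val_rev, Equiv.refl_apply]; omega)
  have hdet : N.det ≠ 0 := by
    rw [det_of_isUpperTriangular hN]
    exact Finset.prod_ne_zero_iff.mpr fun i _ => hdiag i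
  rw [← rank_submatrix _ Fin.revPerm (Equiv.refl _), rank_of_det_ne_zero hdet, Fintype.card_fin]

lemma pathLap_apply_eq_zero_of_succ_lt {n : ℕ} (a : Fin n → ℝ) {i j : Fin (n + 1)}
    (hij : (i : ℕ) + 1 < j) : pathLap n a i j = 0 := by
  have h₁ : (j : ℕ) + 1 ≠ i := by omega
  have h₂ : i ≠ j := fun h => by subst h; omega
  simp [pathLap, hij.ne, h₁, h₂]

lemma pathLap_castSucc_succ {n : ℕ} (a : Fin n → ℝ) (k : Fin n) :
    pathLap n a k.castSucc k.succ = a k := by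
  simp [pathLap]

theorem stmt_13 (n : ℕ) (a : Fin n → ℝ) (ha : ∀ k, a k ≠ 0) :
    (kalman n (pathLap n a) (Pi.single (Fin.last n) 1)).rank = n + 1 :=
  kalman_rank_of_lowerHessenberg (fun _ _ => pathLap_apply_eq_zero_of_succ_lt a)
    fun k => pathLap_castSucc_succ a k ▸ ha k
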